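/- arXiv:1504.07610 — 3 statements merged into one kernel-verified Lean document; each statement's English description precedes it below -/
import Mathlib

section
/- With f as above (principal-branch antiderivative of the rational potential u_0), for each fixed m ∈ {0, 1, ..., P}, the limit of f(x) as x → ∞ along any path remaining in the region G_m (points x of large modulus whose argument places them between the upward branch cuts emanating from z_m and z_{m+1}, in the upper half-plane) equals 2πi Σ_{p=1}^m c_p. In particular, for x → -∞ along the real axis (m = 0) the limit is 0, and for x → +∞ along the real axis (m = P) the limit is 2πi Σ_{p=1}^P c_p. -/
/-!
Write `f` as `∑ c_p ℓ⁺(x - z_p) + c̄_p ℓ⁻(x - z̄_p)`, where `ℓ±` are the branches of `log (-w)` with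
cut along the upward, resp. downward, imaginary half-axis. Since `∑ (c_p + c̄_p) = 0`, a common
reference logarithm `L x` may be subtracted from every branch. In each region `G_m` the difference
of a branch and `L x` is `Log ((x - a) / (x - b))`, which tends to `0` because `x - a` and `x - b`
lie in a common half-plane on which `Log` is additive, plus a constant: `2πi` for the upper-cut
branches at `z_1, …, z_m`, whose cuts lie to the left of `x`, and `0` otherwise.
-/

open Complex Filter Finset
open scoped Real

/-- The region `G_m`: for `m = 0` the half-plane left of `Re z₁`, for `m = P` the
half-plane right of `Re z_P`, and for `0 < m < P` the part of the upper half-plane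
strictly between the upward branch cuts emanating from `z_m` and `z_{m+1}`. -/
def Gregion (P : ℕ) (z : ℕ → ℂ) (m : ℕ) : Set ℂ :=
  if m = 0 then {x | x.re < (z 1).re}
  else if m = P then {x | (z P).re < x.re}
  else {x | 0 < x.im ∧ (z m).re < x.re ∧ x.re < (z (m + 1)).re}

open scoped ComplexConjugate Topology
open Bornology

namespace Complex

lemma log_neg_of_im_pos {w : ℂ} (hw : 0 < w.im) : log (-w) = log w - π * I := by
  apply Complex.ext <;> simp [log_re, log_im, arg_neg_eq_arg_sub_pi_of_im_pos hw]

lemma log_I_mul_of_re_pos {w : ℂ} (hw : 0 < w.re) : log (I * w) = log w + π * I / 2 := by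
  have harg := abs_lt.mp (abs_arg_lt_pi_div_two_iff.mpr (Or.inl hw))
  rw [(log_mul_eq_add_log_iff I_ne_zero (ne_of_apply_ne re hw.ne')).mpr, log_I]
  · ring
  · rw [arg_I]; constructor <;> linarith

lemma log_neg_I_mul {w : ℂ} (hw : 0 < w.re ∨ 0 < w.im) : log (-I * w) = log w - π * I / 2 := by
  have hw0 : w ≠ 0 := by rintro rfl; simp at hw
  have harg : -(π / 2) < arg w := neg_pi_div_two_lt_arg_iff.mpr (hw.imp_right le_of_lt)
  rw [(log_mul_eq_add_log_iff (neg_ne_zero.mpr I_ne_zero) hw0).mpr, log_neg_I]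
  · ring
  · rw [arg_neg_I]; constructor <;> linarith [arg_le_pi w, Real.pi_pos]

lemma log_div_eq_sub {u v : ℂ} (hu : u ≠ 0) (hv : v ≠ 0) (h : arg u - arg v ∈ Set.Ioc (-π) π) :
    log (u / v) = log u - log v := by
  calc log (u / v) = log (exp (log u - log v)) := by rw [exp_sub, exp_log hu, exp_log hv]
    _ = log u - log v := log_exp (by simpa [log_im] using h.1) (by simpa [log_im] using h.2)

/-- On each of the half-planes `0 < re` and `0 < im` the arguments differ by less than `π`. -/
lemma log_div_eq_sub_of_half_plane {u v : ℂ}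
    (h : (0 < u.re ∧ 0 < v.re) ∨ (0 < u.im ∧ 0 < v.im)) : log (u / v) = log u - log v := by
  rcases h with ⟨hu, hv⟩ | ⟨hu, hv⟩
  · have hu' := abs_lt.mp (abs_arg_lt_pi_div_two_iff.mpr (Or.inl hu))
    have hv' := abs_lt.mp (abs_arg_lt_pi_div_two_iff.mpr (Or.inl hv))
    exact log_div_eq_sub (ne_of_apply_ne re hu.ne') (ne_of_apply_ne re hv.ne')
      ⟨by linarith, by linarith⟩
  · have hu' := arg_lt_pi_iff.mpr (Or.inr hu.ne')
    have hv' := arg_lt_pi_iff.mpr (Or.inr hv.ne')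
    have hu0 := arg_nonneg_iff.mpr hu.le
    have hv0 := arg_nonneg_iff.mpr hv.le
    exact log_div_eq_sub (ne_of_apply_ne im hu.ne') (ne_of_apply_ne im hv.ne')
      ⟨by linarith, by linarith⟩

lemma tendsto_sub_div_sub_cobounded (a b : ℂ) :
    Tendsto (fun x => (x - a) / (x - b)) (cobounded ℂ) (𝓝 1) := by
  have h : Tendsto (fun x => (1 - a * x⁻¹) / (1 - b * x⁻¹)) (cobounded ℂ)
      (𝓝 ((1 - a * 0) / (1 - b * 0))) :=
    (tendsto_const_nhds.sub (tendsto_inv₀_cobounded.const_mul a)).div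
      (tendsto_const_nhds.sub (tendsto_inv₀_cobounded.const_mul b)) (by simp)
  simp only [mul_zero, sub_zero, div_one] at h
  refine h.congr' ?_
  filter_upwards [eventually_ne_cobounded 0] with x hx
  field_simp

lemma tendsto_log_sub_log {α : Type*} {l : Filter α} {u v : α → ℂ}
    (hratio : Tendsto (fun x => u x / v x) l (𝓝 1))
    (hplane : ∀ᶠ x in l, (0 < (u x).re ∧ 0 < (v x).re) ∨ (0 < (u x).im ∧ 0 < (v x).im)) :
    Tendsto (fun x => log (u x) - log (v x)) l (𝓝 0) := by
  have h := hratio.clog (Or.inl one_pos)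
  rw [log_one] at h
  exact h.congr' (hplane.mono fun x hx => log_div_eq_sub_of_half_plane hx)

lemma tendsto_log_sub_sub_log_sub {l : Filter ℂ} (hl : l ≤ cobounded ℂ) {a b : ℂ}
    (hplane : ∀ᶠ x in l, (a.re < x.re ∧ b.re < x.re) ∨ (a.im < x.im ∧ b.im < x.im)) :
    Tendsto (fun x => log (x - a) - log (x - b)) l (𝓝 0) :=
  tendsto_log_sub_log ((tendsto_sub_div_sub_cobounded a b).mono_left hl)
    (hplane.mono fun x hx => by simpa only [sub_re, sub_im, sub_pos] using hx)

lemma tendsto_log_sub_sub_log_sub_of_re_lt {l : Filter ℂ} (hl : l ≤ cobounded ℂ) {a b : ℂ}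
    (hre : ∀ᶠ x in l, x.re < a.re ∧ x.re < b.re) :
    Tendsto (fun x => log (a - x) - log (b - x)) l (𝓝 0) :=
  tendsto_log_sub_log (((tendsto_sub_div_sub_cobounded a b).mono_left hl).congr fun x => by
      rw [← neg_sub a x, ← neg_sub b x, neg_div_neg_eq])
    (hre.mono fun x hx => Or.inl (by simpa only [sub_re, sub_pos] using hx))

lemma eventually_lt_im_of_upper_strip (a b B : ℝ) :
    ∀ᶠ x in cobounded ℂ ⊓ 𝓟 {x : ℂ | 0 < x.im ∧ a < x.re ∧ x.re < b}, B < x.im := by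
  filter_upwards [(eventually_cobounded_le_norm (max |a| |b| + |B| + 1)).filter_mono inf_le_left,
    mem_inf_of_right (mem_principal_self _)] with x hnorm ⟨him, ha, hb⟩
  have hre : |x.re| ≤ max |a| |b| := abs_le_max_abs_abs ha.le hb.le
  linarith [norm_le_abs_re_add_abs_im x, abs_of_pos him, le_abs_self B]

end Complex

/-- Branches of `log (-w)`, normalised to agree with the principal one on `re w < 0`, whose cuts
run along the upward, resp. downward, imaginary half-axis. -/
noncomputable def upperCutLog (w : ℂ) : ℂ := log (I * w) + π * I / 2

noncomputable def lowerCutLog (w : ℂ) : ℂ := log (-I * w) - π * I / 2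

lemma upperCutLog_of_re_pos {w : ℂ} (hw : 0 < w.re) : upperCutLog w = log w + π * I := by
  rw [upperCutLog, log_I_mul_of_re_pos hw]; ring

lemma upperCutLog_of_re_neg {w : ℂ} (hw : w.re < 0) : upperCutLog w = log (-w) := by
  rw [upperCutLog, show I * w = -I * -w by ring,
    log_neg_I_mul (Or.inl (by simpa only [neg_re, neg_pos] using hw))]
  ring

lemma upperCutLog_of_re_neg_of_im_pos {w : ℂ} (hre : w.re < 0) (him : 0 < w.im) :
    upperCutLog w = log w - π * I := by
  rw [upperCutLog_of_re_neg hre, log_neg_of_im_pos him]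

lemma lowerCutLog_of_half_plane {w : ℂ} (hw : 0 < w.re ∨ 0 < w.im) :
    lowerCutLog w = log w - π * I := by
  rw [lowerCutLog, log_neg_I_mul hw]; ring

lemma lowerCutLog_of_re_neg {w : ℂ} (hw : w.re < 0) : lowerCutLog w = log (-w) := by
  rw [lowerCutLog, show -I * w = I * -w by ring,
    log_I_mul_of_re_pos (by simpa only [neg_re, neg_pos] using hw)]
  ring

noncomputable def principalPotential (P : ℕ) (c z : ℕ → ℂ) (x : ℂ) : ℂ :=
  ∑ p ∈ Icc 1 P, (c p * upperCutLog (x - z p) + conj (c p) * lowerCutLog (x - conj (z p)))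

lemma tendsto_sum_mul_add_mul_of_sub {ι α R : Type*} [CommRing R] [TopologicalSpace R]
    [IsTopologicalRing R] {l : Filter α} {s : Finset ι} {a b : ι → R}
    (hab : ∑ i ∈ s, (a i + b i) = 0) {g h : ι → α → R} (L : α → R) {u v : ι → R}
    (hg : ∀ i ∈ s, Tendsto (fun x => g i x - L x) l (𝓝 (u i)))
    (hh : ∀ i ∈ s, Tendsto (fun x => h i x - L x) l (𝓝 (v i))) :
    Tendsto (fun x => ∑ i ∈ s, (a i * g i x + b i * h i x)) l
      (𝓝 (∑ i ∈ s, (a i * u i + b i * v i))) := by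
  have hsplit : ∀ x, ∑ i ∈ s, (a i * g i x + b i * h i x)
      = ∑ i ∈ s, (a i * (g i x - L x) + b i * (h i x - L x)) + (∑ i ∈ s, (a i + b i)) * L x := by
    intro x
    rw [Finset.sum_mul, ← Finset.sum_add_distrib]
    exact Finset.sum_congr rfl fun i _ => by ring
  simp_rw [hsplit, hab, zero_mul, add_zero]
  exact tendsto_finsetSum s fun i hi => ((hg i hi).const_mul (a i)).add ((hh i hi).const_mul (b i))

lemma tendsto_upperCutLog_sub_of_re_lt {l : Filter ℂ} (hl : l ≤ cobounded ℂ) {a b : ℂ}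
    (hre : ∀ᶠ x in l, a.re < x.re)
    (hplane : ∀ᶠ x in l, (a.re < x.re ∧ b.re < x.re) ∨ (a.im < x.im ∧ b.im < x.im)) :
    Tendsto (fun x => upperCutLog (x - a) - (log (x - b) - π * I)) l (𝓝 (2 * π * I)) := by
  have h := (tendsto_log_sub_sub_log_sub hl hplane).add_const (2 * π * I)
  rw [zero_add] at h
  refine h.congr' (hre.mono fun x hx => ?_)
  dsimp only
  rw [upperCutLog_of_re_pos (by simpa only [sub_re, sub_pos] using hx)]
  ring

lemma tendsto_upperCutLog_sub_of_lt_re {l : Filter ℂ} (hl : l ≤ cobounded ℂ) {a b : ℂ}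
    (hre : ∀ᶠ x in l, x.re < a.re) (him : ∀ᶠ x in l, a.im < x.im ∧ b.im < x.im) :
    Tendsto (fun x => upperCutLog (x - a) - (log (x - b) - π * I)) l (𝓝 0) := by
  refine (tendsto_log_sub_sub_log_sub hl (him.mono fun x => Or.inr)).congr'
    ((hre.and him).mono fun x hx => ?_)
  dsimp only
  rw [upperCutLog_of_re_neg_of_im_pos (by simpa only [sub_re, sub_neg] using hx.1)
    (by simpa only [sub_im, sub_pos] using hx.2.1)]
  ring

lemma tendsto_lowerCutLog_sub {l : Filter ℂ} (hl : l ≤ cobounded ℂ) {a b : ℂ}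
    (hplane : ∀ᶠ x in l, (a.re < x.re ∧ b.re < x.re) ∨ (a.im < x.im ∧ b.im < x.im)) :
    Tendsto (fun x => lowerCutLog (x - a) - (log (x - b) - π * I)) l (𝓝 0) := by
  refine (tendsto_log_sub_sub_log_sub hl hplane).congr' (hplane.mono fun x hx => ?_)
  dsimp only
  rw [lowerCutLog_of_half_plane (hx.imp (fun h => by simpa only [sub_re, sub_pos] using h.1)
    (fun h => by simpa only [sub_im, sub_pos] using h.1))]
  ring

section Regions

variable {P : ℕ} {c z : ℕ → ℂ} (hsum : ∑ p ∈ Icc 1 P, (c p + conj (c p)) = 0)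
include hsum

lemma tendsto_principalPotential {l : Filter ℂ} {m : ℕ} (hm : m ≤ P) (L : ℂ → ℂ)
    (hup : ∀ p ∈ Icc 1 P, Tendsto (fun x => upperCutLog (x - z p) - L x) l
      (𝓝 (if p ≤ m then 2 * π * I else 0)))
    (hdown : ∀ p ∈ Icc 1 P, Tendsto (fun x => lowerCutLog (x - conj (z p)) - L x) l (𝓝 0)) :
    Tendsto (principalPotential P c z) l (𝓝 (2 * π * I * ∑ p ∈ Icc 1 m, c p)) := by
  have hlimit : ∑ p ∈ Icc 1 P, (c p * (if p ≤ m then 2 * π * I else 0) + conj (c p) * 0)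
      = 2 * π * I * ∑ p ∈ Icc 1 m, c p := by
    have hfilter : (Icc 1 P).filter (· ≤ m) = Icc 1 m := by
      ext p; simp only [mem_filter, mem_Icc]; omega
    simp only [mul_zero, add_zero, mul_ite]
    rw [← sum_filter, hfilter, mul_sum]
    exact sum_congr rfl fun _ _ => mul_comm _ _
  rw [← hlimit]
  exact tendsto_sum_mul_add_mul_of_sub hsum L hup hdown

variable (hmono : ∀ p ∈ Icc 1 P, ∀ q ∈ Icc 1 P, p ≤ q → (z p).re ≤ (z q).re)
include hmono

theorem tendsto_principalPotential_of_re_lt {l : Filter ℂ} (hl : l ≤ cobounded ℂ)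
    (hS : ∀ᶠ x in l, x.re < (z 1).re) : Tendsto (principalPotential P c z) l (𝓝 0) := by
  have hleft : ∀ p ∈ Icc 1 P, ∀ᶠ x in l, x.re < (z p).re ∧ x.re < (z 1).re := by
    intro p hp
    obtain ⟨hp1, hpP⟩ := mem_Icc.1 hp
    exact hS.mono fun x hx => ⟨hx.trans_le (hmono 1 (left_mem_Icc.2 (hp1.trans hpP)) p hp hp1), hx⟩
  rw [show (0 : ℂ) = 2 * π * I * ∑ p ∈ Icc 1 0, c p by simp]
  refine tendsto_principalPotential hsum (Nat.zero_le P) (fun x => log (z 1 - x))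
    (fun p hp => ?_) (fun p hp => ?_)
  · rw [if_neg (not_le.2 (mem_Icc.1 hp).1)]
    refine (tendsto_log_sub_sub_log_sub_of_re_lt hl (hleft p hp)).congr'
      ((hleft p hp).mono fun x hx => ?_)
    dsimp only
    rw [upperCutLog_of_re_neg (show (x - z p).re < 0 by simpa using hx.1), neg_sub]
  · have hleft' : ∀ᶠ x in l, x.re < (conj (z p)).re ∧ x.re < (z 1).re := by
      simpa using hleft p hp
    refine (tendsto_log_sub_sub_log_sub_of_re_lt hl hleft').congr' (hleft'.mono fun x hx => ?_)
    dsimp only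
    rw [lowerCutLog_of_re_neg (show (x - conj (z p)).re < 0 by simpa using hx.1), neg_sub]

theorem tendsto_principalPotential_of_lt_re {l : Filter ℂ} (hl : l ≤ cobounded ℂ)
    (hS : ∀ᶠ x in l, (z P).re < x.re) :
    Tendsto (principalPotential P c z) l (𝓝 (2 * π * I * ∑ p ∈ Icc 1 P, c p)) := by
  have hright : ∀ p ∈ Icc 1 P, ∀ᶠ x in l, (z p).re < x.re ∧ (z 1).re < x.re := by
    intro p hp
    obtain ⟨hp1, hpP⟩ := mem_Icc.1 hp
    have hP : P ∈ Icc 1 P := right_mem_Icc.2 (hp1.trans hpP)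
    exact hS.mono fun x hx => ⟨(hmono p hp P hP hpP).trans_lt hx,
      (hmono 1 (left_mem_Icc.2 (hp1.trans hpP)) P hP (hp1.trans hpP)).trans_lt hx⟩
  refine tendsto_principalPotential hsum le_rfl (fun x => log (x - z 1) - π * I)
    (fun p hp => ?_) (fun p hp => ?_)
  · rw [if_pos (mem_Icc.1 hp).2]
    exact tendsto_upperCutLog_sub_of_re_lt hl ((hright p hp).mono fun x hx => hx.1)
      ((hright p hp).mono fun x => Or.inl)
  · exact tendsto_lowerCutLog_sub hl ((hright p hp).mono fun x hx => Or.inl (by simpa using hx))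

theorem tendsto_principalPotential_of_strip {l : Filter ℂ} (hl : l ≤ cobounded ℂ) {m : ℕ}
    (hm : 1 ≤ m) (hmP : m < P) (hS : ∀ᶠ x in l, (z m).re < x.re ∧ x.re < (z (m + 1)).re)
    (him : ∀ B, ∀ᶠ x in l, B < x.im) :
    Tendsto (principalPotential P c z) l (𝓝 (2 * π * I * ∑ p ∈ Icc 1 m, c p)) := by
  have hmI : m ∈ Icc 1 P := mem_Icc.2 ⟨hm, hmP.le⟩
  have hm1I : m + 1 ∈ Icc 1 P := mem_Icc.2 ⟨by omega, hmP⟩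
  refine tendsto_principalPotential hsum hmP.le (fun x => log (x - z 1) - π * I)
    (fun p hp => ?_) (fun p hp => ?_)
  · have hup : ∀ᶠ x in l, (z p).im < x.im ∧ (z 1).im < x.im := (him _).mono fun x hx =>
      ⟨(le_max_left _ _).trans_lt hx, (le_max_right _ _).trans_lt hx⟩
    split_ifs with hpm
    · exact tendsto_upperCutLog_sub_of_re_lt hl
        (hS.mono fun x hx => (hmono p hp m hmI hpm).trans_lt hx.1) (hup.mono fun x => Or.inr)
    · exact tendsto_upperCutLog_sub_of_lt_re hl
        (hS.mono fun x hx => hx.2.trans_le (hmono (m + 1) hm1I p hp (by omega))) hup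
  · refine tendsto_lowerCutLog_sub hl ((him (max (-(z p).im) (z 1).im)).mono fun x hx => ?_)
    exact Or.inr ⟨by simpa using (le_max_left _ _).trans_lt hx, (le_max_right _ _).trans_lt hx⟩

end Regions

theorem stmt3_general (P : ℕ) (c z : ℕ → ℂ)
    (hzre : ∀ p ∈ Finset.Icc 1 P, ∀ q ∈ Finset.Icc 1 P, p < q → (z p).re < (z q).re)
    (hsum : ∑ p ∈ Finset.Icc 1 P, (c p + (starRingEnd ℂ) (c p)) = 0)
    (f : ℂ → ℂ)
    (hf : ∀ x : ℂ, f x = ∑ p ∈ Finset.Icc 1 P,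
      (c p * (Complex.log (I * (x - z p)) + (π : ℂ) * I / 2)
        + (starRingEnd ℂ) (c p) * (Complex.log (-I * (x - (starRingEnd ℂ) (z p))) - (π : ℂ) * I / 2))) :
    (∀ m ≤ P, Tendsto f ((Bornology.cobounded ℂ) ⊓ 𝓟 (Gregion P z m))
        (nhds (2 * (π : ℂ) * I * ∑ p ∈ Finset.Icc 1 m, c p))) ∧
    Tendsto (fun x : ℝ => f x) atBot (nhds 0) ∧
    Tendsto (fun x : ℝ => f x) atTop (nhds (2 * (π : ℂ) * I * ∑ p ∈ Finset.Icc 1 P, c p)) := by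
  have hmono : ∀ p ∈ Icc 1 P, ∀ q ∈ Icc 1 P, p ≤ q → (z p).re ≤ (z q).re :=
    fun p hp q hq hpq => hpq.eq_or_lt.elim (fun h => h ▸ le_rfl) fun h => (hzre p hp q hq h).le
  obtain rfl : f = principalPotential P c z := funext hf
  refine ⟨fun m hm => ?_, ?_, ?_⟩
  · have hS : ∀ᶠ x in cobounded ℂ ⊓ 𝓟 (Gregion P z m), x ∈ Gregion P z m :=
      mem_inf_of_right (mem_principal_self _)
    unfold Gregion at hS ⊢
    split_ifs at hS ⊢ with h0 hP
    · subst h0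
      simpa using tendsto_principalPotential_of_re_lt hsum hmono inf_le_left hS
    · subst hP
      exact tendsto_principalPotential_of_lt_re hsum hmono inf_le_left hS
    · exact tendsto_principalPotential_of_strip hsum hmono inf_le_left (by omega) (by omega)
        (hS.mono fun x hx => hx.2) (eventually_lt_im_of_upper_strip _ _)
  · exact (tendsto_principalPotential_of_re_lt hsum hmono (RCLike.tendsto_ofReal_atBot_cobounded ℂ)
      (eventually_map.2 (by simpa using eventually_lt_atBot (z 1).re))).comp tendsto_map
  · exact (tendsto_principalPotential_of_lt_re hsum hmono (RCLike.tendsto_ofReal_atTop_cobounded ℂ)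
      (eventually_map.2 (by simpa using eventually_gt_atTop (z P).re))).comp tendsto_map

/-- For each `m ∈ {0,…,P}`, `f(x) → 2πi Σ_{p=1}^m c_p` as `x → ∞` within
`G_m`; in particular `f(x) → 0` as `x → -∞` and `f(x) → 2πi Σ_{p=1}^P c_p` as
`x → +∞` along the real axis. -/
theorem stmt3 (P : ℕ) (c z : ℕ → ℂ)
    (hc : ∀ p ∈ Finset.Icc 1 P, c p ≠ 0)
    (hzim : ∀ p ∈ Finset.Icc 1 P, 0 < (z p).im)
    (hzre : ∀ p ∈ Finset.Icc 1 P, ∀ q ∈ Finset.Icc 1 P, p < q → (z p).re < (z q).re)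
    (hsum : ∑ p ∈ Finset.Icc 1 P, (c p + (starRingEnd ℂ) (c p)) = 0)
    (f : ℂ → ℂ)
    (hf : ∀ x : ℂ, f x = ∑ p ∈ Finset.Icc 1 P,
      (c p * (Complex.log (I * (x - z p)) + (π : ℂ) * I / 2)
        + (starRingEnd ℂ) (c p) * (Complex.log (-I * (x - (starRingEnd ℂ) (z p))) - (π : ℂ) * I / 2))) :
    (∀ m ≤ P, Tendsto f ((Bornology.cobounded ℂ) ⊓ 𝓟 (Gregion P z m))
        (nhds (2 * (π : ℂ) * I * ∑ p ∈ Finset.Icc 1 m, c p))) ∧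
    Tendsto (fun x : ℝ => f x) atBot (nhds 0) ∧
    Tendsto (fun x : ℝ => f x) atTop (nhds (2 * (π : ℂ) * I * ∑ p ∈ Finset.Icc 1 P, c p)) :=
  stmt3_general P c z hzre hsum f hf
end

section
/- Let λ < 0, ε > 0, and let Φ(x;λ) = -(i/ε) e^{i h(x;λ)/ε} ∫_{-∞}^{x} e^{-i h(z;λ)/ε} Σ_{p=1}^P φ_p/(z - z_p) dz where h(x;λ) = λx + f(x), f bounded near the real axis with f(-∞) = 0, and Im z_p > 0. If Φ extends analytically to the closed upper half x-plane and Σ_{p=1}^P φ_p = λ, then (1/(2πi)) ∫_{-∞}^{∞} u_0(x) Φ(x) dx = λ, where u_0(x) = Σ_{p=1}^P (c_p/(x - z_p) + conj(c_p)/(x - conj(z_p))) and φ_p = c_p Φ(z_p). -/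
open Complex Filter Finset MeasureTheory Set
open scoped Real Topology



lemma integrable_of_sq_decay (f : ℝ → ℂ) (hf : Continuous f) (C R : ℝ)
    (h : ∀ x : ℝ, R ≤ |x| → ‖f x‖ ≤ C / x ^ 2) : Integrable f := by
  set R' : ℝ := max R 1 with hR'
  have hR1 : (1:ℝ) ≤ R' := le_max_right _ _
  have hC : 0 ≤ C := by
    have h0 := h R' (by rw [_root_.abs_of_nonneg (by linarith)]; exact le_max_left _ _)
    by_contra hc
    have : C / R' ^ 2 < 0 := div_neg_of_neg_of_pos (by linarith) (by positivity)
    nlinarith [norm_nonneg (f R')]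
  obtain ⟨B, hB⟩ := (isCompact_Icc (a := -R') (b := R')).exists_bound_of_continuousOn
    hf.continuousOn
  set D : ℝ := max (max B 0 * (1 + R' ^ 2)) (2 * C) with hD
  have hD0 : 0 ≤ D := le_trans (by positivity) (le_max_right _ _)
  have key : ∀ x : ℝ, ‖f x‖ ≤ D / (1 + x ^ 2) := by
    intro x
    have hx2pos : (0:ℝ) < 1 + x ^ 2 := by positivity
    rcases le_or_gt (|x|) R' with hx | hx
    · have hmem : x ∈ Set.Icc (-R') R' := abs_le.mp hx
      have h1 : ‖f x‖ ≤ max B 0 := le_trans (hB x hmem) (le_max_left _ _)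
      have h2 : max B 0 * (1 + R' ^ 2) ≤ D := le_max_left _ _
      have hx2 : x ^ 2 ≤ R' ^ 2 := by nlinarith [abs_nonneg x, _root_.sq_abs x]
      calc ‖f x‖ ≤ max B 0 := h1
        _ = max B 0 * (1 + x ^ 2) / (1 + x ^ 2) := by field_simp
        _ ≤ max B 0 * (1 + R' ^ 2) / (1 + x ^ 2) := by gcongr
        _ ≤ D / (1 + x ^ 2) := by gcongr
    · have hx2 : (1:ℝ) ≤ x ^ 2 := by nlinarith [_root_.sq_abs x, abs_nonneg x]
      have h1 : ‖f x‖ ≤ C / x ^ 2 := h x (le_trans (le_max_left _ _) hx.le)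
      calc ‖f x‖ ≤ C / x ^ 2 := h1
        _ ≤ 2 * C / (1 + x ^ 2) := by
            rw [div_le_div_iff₀ (by nlinarith) hx2pos]; nlinarith
        _ ≤ D / (1 + x ^ 2) := by gcongr; exact le_max_right _ _
  refine (integrable_inv_one_add_sq.const_mul D).mono' hf.aestronglyMeasurable ?_
  filter_upwards with x
  calc ‖f x‖ ≤ D / (1 + x ^ 2) := key x
    _ = D * (1 + x ^ 2)⁻¹ := div_eq_mul_inv _ _
lemma halfplane_zero (g : ℂ → ℂ) (s : Set ℂ) (hs : s.Countable)
    (hc : ContinuousOn g {w : ℂ | 0 ≤ w.im})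
    (hd : ∀ w : ℂ, 0 < w.im → w ∉ s → DifferentiableAt ℂ g w)
    (C R : ℝ) (hdec : ∀ w : ℂ, 0 ≤ w.im → R ≤ ‖w‖ → ‖g w‖ ≤ C / ‖w‖ ^ 2) :
    Integrable (fun x : ℝ => g x) ∧ ∫ x : ℝ, g x = 0 := by
  have hgr : Continuous fun x : ℝ => g x :=
    hc.comp_continuous Complex.continuous_ofReal (fun x => by simp [Set.mem_setOf_eq])
  have hint : Integrable (fun x : ℝ => g x) := by
    refine integrable_of_sq_decay _ hgr C R (fun x hx => ?_)
    have := hdec x (by simp) (by rwa [Complex.norm_real, Real.norm_eq_abs])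
    rwa [Complex.norm_real, Real.norm_eq_abs, _root_.sq_abs] at this
  refine ⟨hint, ?_⟩
  have hC : 0 ≤ C := by
    set r : ℝ := max R 1 with hr
    have hr1 : (1:ℝ) ≤ r := le_max_right _ _
    have h0 := hdec ((r:ℂ) * I) (by simp; linarith) (by
      rw [norm_mul, Complex.norm_I, mul_one, Complex.norm_real, Real.norm_eq_abs,
        _root_.abs_of_nonneg (by linarith)]
      exact le_max_left _ _)
    have hn : ‖(r:ℂ) * I‖ = r := by
      rw [norm_mul, Complex.norm_I, mul_one, Complex.norm_real, Real.norm_eq_abs,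
        _root_.abs_of_nonneg (by linarith)]
    rw [hn] at h0
    by_contra hcon
    have : C / r ^ 2 < 0 := div_neg_of_neg_of_pos (by linarith) (by positivity)
    nlinarith [norm_nonneg (g ((r:ℂ) * I))]
  have key : ∀ T : ℝ, max R 1 ≤ T → ‖∫ x in (-T)..T, g x‖ ≤ 4 * C / T := by
    intro T hT
    have hT1 : (1:ℝ) ≤ T := le_trans (le_max_right _ _) hT
    have hT0 : (0:ℝ) < T := by linarith
    have hTR : R ≤ T := le_trans (le_max_left _ _) hT
    have hzero := Complex.integral_boundary_rect_eq_zero_of_differentiable_on_off_countable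
      g (-(T:ℂ)) ((T:ℂ) + T * I) s hs ?_ ?_
    · have hre1 : (-(T:ℂ)).re = -T := by simp
      have him1 : (-(T:ℂ)).im = 0 := by simp
      have hre2 : ((T:ℂ) + T * I).re = T := by simp
      have him2 : ((T:ℂ) + T * I).im = T := by simp
      rw [hre1, him1, hre2, him2] at hzero
      simp only [Complex.ofReal_zero, zero_mul, add_zero, Complex.ofReal_neg] at hzero
      -- hzero : (∫ x in -T..T, g x) - (∫ x in -T..T, g (x + T*I))
      --   + I • (∫ y in 0..T, g (T + y*I)) - I • (∫ y in 0..T, g (-T + y*I)) = 0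
      have heq : (∫ x in (-T)..T, g x) = (∫ x in (-T)..T, g ((x:ℂ) + (T:ℂ) * I))
          - I • (∫ y in (0:ℝ)..T, g ((T:ℂ) + (y:ℂ) * I))
          + I • (∫ y in (0:ℝ)..T, g (-(T:ℂ) + (y:ℂ) * I)) := by
        linear_combination hzero
      have hb : ∀ (w : ℂ), 0 ≤ w.im → T ≤ ‖w‖ → ‖g w‖ ≤ C / T ^ 2 := by
        intro w h1 h2
        calc ‖g w‖ ≤ C / ‖w‖ ^ 2 := hdec w h1 (le_trans hTR h2)
          _ ≤ C / T ^ 2 := by gcongr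
      have btop : ‖∫ x in (-T)..T, g ((x:ℂ) + (T:ℂ) * I)‖ ≤ C / T ^ 2 * (2 * T) := by
        have := intervalIntegral.norm_integral_le_of_norm_le_const
          (C := C / T ^ 2) (f := fun x : ℝ => g ((x:ℂ) + (T:ℂ) * I)) (a := -T) (b := T) ?_
        · calc ‖_‖ ≤ C / T ^ 2 * |T - (-T)| := this
            _ = C / T ^ 2 * (2 * T) := by rw [_root_.abs_of_nonneg (by linarith)]; ring_nf
        · intro x hx
          refine hb _ (by simp; linarith) ?_
          calc T = |((x:ℂ) + (T:ℂ) * I).im| := by simp [_root_.abs_of_nonneg hT0.le]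
            _ ≤ ‖(x:ℂ) + (T:ℂ) * I‖ := Complex.abs_im_le_norm _
      have bright : ‖∫ y in (0:ℝ)..T, g ((T:ℂ) + (y:ℂ) * I)‖ ≤ C / T ^ 2 * T := by
        have := intervalIntegral.norm_integral_le_of_norm_le_const
          (C := C / T ^ 2) (f := fun y : ℝ => g ((T:ℂ) + (y:ℂ) * I)) (a := 0) (b := T) ?_
        · calc ‖_‖ ≤ C / T ^ 2 * |T - 0| := this
            _ = C / T ^ 2 * T := by rw [sub_zero, _root_.abs_of_nonneg hT0.le]
        · intro y hy
          rw [Set.uIoc_of_le hT0.le] at hy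
          refine hb _ (by simp; linarith [hy.1.le]) ?_
          calc T = |((T:ℂ) + (y:ℂ) * I).re| := by simp [_root_.abs_of_nonneg hT0.le]
            _ ≤ ‖(T:ℂ) + (y:ℂ) * I‖ := Complex.abs_re_le_norm _
      have bleft : ‖∫ y in (0:ℝ)..T, g (-(T:ℂ) + (y:ℂ) * I)‖ ≤ C / T ^ 2 * T := by
        have := intervalIntegral.norm_integral_le_of_norm_le_const
          (C := C / T ^ 2) (f := fun y : ℝ => g (-(T:ℂ) + (y:ℂ) * I)) (a := 0) (b := T) ?_
        · calc ‖_‖ ≤ C / T ^ 2 * |T - 0| := this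
            _ = C / T ^ 2 * T := by rw [sub_zero, _root_.abs_of_nonneg hT0.le]
        · intro y hy
          rw [Set.uIoc_of_le hT0.le] at hy
          refine hb _ (by simp; linarith [hy.1.le]) ?_
          calc T = |(-(T:ℂ) + (y:ℂ) * I).re| := by simp [abs_of_nonpos, _root_.abs_of_nonneg hT0.le]
            _ ≤ ‖-(T:ℂ) + (y:ℂ) * I‖ := Complex.abs_re_le_norm _
      calc ‖∫ x in (-T)..T, g x‖
          ≤ ‖∫ x in (-T)..T, g ((x:ℂ) + (T:ℂ) * I)‖
            + ‖I • (∫ y in (0:ℝ)..T, g ((T:ℂ) + (y:ℂ) * I))‖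
            + ‖I • (∫ y in (0:ℝ)..T, g (-(T:ℂ) + (y:ℂ) * I))‖ := by
            rw [heq]
            exact le_trans (norm_add_le _ _) (add_le_add (norm_sub_le _ _) le_rfl)
        _ ≤ C / T ^ 2 * (2 * T) + C / T ^ 2 * T + C / T ^ 2 * T := by
            rw [norm_smul, norm_smul, Complex.norm_I, one_mul, one_mul]
            exact add_le_add (add_le_add btop bright) bleft
        _ = 4 * C / T := by field_simp; ring
    · -- continuity on rectangle
      refine hc.mono ?_
      intro p hp
      rw [Complex.mem_reProdIm] at hp
      have := hp.2
      rw [Set.uIcc_of_le (by simp; linarith : (-(T:ℂ)).im ≤ ((T:ℂ) + T * I).im)] at this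
      simp only [Set.mem_setOf_eq]
      have h0 : (-(T:ℂ)).im = 0 := by simp
      rw [h0] at this
      exact this.1
    · intro x hx
      obtain ⟨hx1, hx2⟩ := hx
      rw [Complex.mem_reProdIm] at hx1
      have him := hx1.2
      have h0 : (-(T:ℂ)).im = 0 := by simp
      have h1 : ((T:ℂ) + T * I).im = T := by simp
      rw [h0, h1, min_eq_left (by linarith), max_eq_right (by linarith)] at him
      exact hd x him.1 hx2
  have h1 : Tendsto (fun T : ℝ => ∫ x in (-T)..T, g x) atTop (𝓝 (∫ x : ℝ, g x)) :=
    intervalIntegral_tendsto_integral hint tendsto_neg_atTop_atBot tendsto_id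
  have h2 : Tendsto (fun T : ℝ => ∫ x in (-T)..T, g x) atTop (𝓝 0) := by
    refine squeeze_zero_norm' (a := fun T : ℝ => 4 * C / T) ?_ ?_
    · filter_upwards [eventually_ge_atTop (max R 1)] with T hT using key T hT
    · exact tendsto_const_nhds.div_atTop tendsto_id
  exact tendsto_nhds_unique h1 h2


lemma psi_facts (a : ℂ) (ha : 0 < a.im) :
    Integrable (fun x : ℝ => (a - (starRingEnd ℂ) a) / (((x:ℂ) - a) * ((x:ℂ) - (starRingEnd ℂ) a)))
    ∧ ∫ x : ℝ, (a - (starRingEnd ℂ) a) / (((x:ℂ) - a) * ((x:ℂ) - (starRingEnd ℂ) a))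
      = 2 * (π:ℂ) * I := by
  set α : ℝ := a.re
  set β : ℝ := a.im
  have hβ : β ≠ 0 := ne_of_gt ha
  set r : ℝ → ℝ := fun x => ((x - α) ^ 2 + β ^ 2)⁻¹ with hr
  have hpt : ∀ x : ℝ, (a - (starRingEnd ℂ) a) / (((x:ℂ) - a) * ((x:ℂ) - (starRingEnd ℂ) a))
      = (2 * (β:ℂ) * I) * ((r x : ℝ) : ℂ) := by
    intro x
    have hden : ((x:ℂ) - a) * ((x:ℂ) - (starRingEnd ℂ) a) = (((x - α) ^ 2 + β ^ 2 : ℝ) : ℂ) := by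
      have h1 := Complex.mul_conj ((x:ℂ) - a)
      rw [map_sub, Complex.conj_ofReal] at h1
      rw [h1]
      congr 1
      simp only [Complex.normSq_apply, Complex.sub_re, Complex.ofReal_re, Complex.sub_im,
        Complex.ofReal_im]
      ring
    have hnum : a - (starRingEnd ℂ) a = 2 * (β:ℂ) * I := by
      rw [Complex.sub_conj]; push_cast; ring
    have hd0 : (((x - α) ^ 2 + β ^ 2 : ℝ) : ℂ) ≠ 0 := by
      rw [Complex.ofReal_ne_zero]; positivity
    rw [hden, hnum, hr, div_eq_mul_inv]
    congr 1
    push_cast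
    ring
  have hreq : r = fun x : ℝ => (β ^ 2)⁻¹ * (1 + ((x - α) / β) ^ 2)⁻¹ := by
    funext x
    rw [hr]
    field_simp
    ring
  have hrint : Integrable r := by
    rw [hreq]
    exact ((integrable_inv_one_add_sq.comp_div hβ).comp_sub_right α).const_mul _
  have hrval : ∫ x : ℝ, r x = π / β := by
    rw [hreq]
    rw [MeasureTheory.integral_const_mul]
    have h1 : ∫ x : ℝ, (1 + ((x - α) / β) ^ 2)⁻¹ = ∫ x : ℝ, (1 + (x / β) ^ 2)⁻¹ :=
      integral_sub_right_eq_self (fun y : ℝ => (1 + (y / β) ^ 2)⁻¹) α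
    rw [h1]
    have h2 : ∫ x : ℝ, (1 + (x / β) ^ 2)⁻¹ = |β| • ∫ x : ℝ, (1 + x ^ 2)⁻¹ :=
      MeasureTheory.Measure.integral_comp_div (fun t : ℝ => (1 + t ^ 2)⁻¹) β
    rw [h2, integral_univ_inv_one_add_sq, smul_eq_mul, _root_.abs_of_pos ha]
    field_simp
  constructor
  · refine (((hrint.ofReal (𝕜 := ℂ)).const_mul (2 * (β:ℂ) * I))).congr ?_
    filter_upwards with x
    exact (hpt x).symm
  · calc ∫ x : ℝ, (a - (starRingEnd ℂ) a) / (((x:ℂ) - a) * ((x:ℂ) - (starRingEnd ℂ) a))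
        = ∫ x : ℝ, (2 * (β:ℂ) * I) * ((r x : ℝ) : ℂ) := by
          congr 1; funext x; exact hpt x
      _ = (2 * (β:ℂ) * I) * ∫ x : ℝ, ((r x : ℝ) : ℂ) := integral_const_mul _ _
      _ = (2 * (β:ℂ) * I) * ((π / β : ℝ) : ℂ) := by
          rw [← hrval]
          congr 1
          exact _root_.integral_ofReal
      _ = 2 * (π:ℂ) * I := by
          have hβc : (β:ℂ) ≠ 0 := Complex.ofReal_ne_zero.2 hβ
          push_cast
          field_simp
section Poles

variable (Φ : ℂ → ℂ) (C R : ℝ)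

lemma hC_nonneg (hdec : ∀ w : ℂ, 0 ≤ w.im → R ≤ ‖w‖ → ‖Φ w‖ ≤ C / ‖w‖)
    : 0 ≤ C := by
  set r : ℝ := max R 1 with hr
  have hr1 : (1:ℝ) ≤ r := le_max_right _ _
  have hn : ‖(r:ℂ) * I‖ = r := by
    rw [norm_mul, Complex.norm_I, mul_one, Complex.norm_real, Real.norm_eq_abs,
      _root_.abs_of_nonneg (by linarith)]
  have h0 := hdec ((r:ℂ) * I) (by simp; linarith) (by rw [hn]; exact le_max_left _ _)
  rw [hn] at h0
  by_contra hcon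
  have : C / r < 0 := div_neg_of_neg_of_pos (by linarith) (by linarith)
  nlinarith [norm_nonneg (Φ ((r:ℂ) * I))]

/-- For a point `b` in the open lower half-plane, the integral of `Φ x / (x - b)` vanishes. -/
lemma conj_pole (hΦan : DifferentiableOn ℂ Φ {w : ℂ | 0 ≤ w.im})
    (hΦcont : ContinuousOn Φ {w : ℂ | 0 ≤ w.im})
    (hdec : ∀ w : ℂ, 0 ≤ w.im → R ≤ ‖w‖ → ‖Φ w‖ ≤ C / ‖w‖)
    (b : ℂ) (hb : b.im < 0) :
    Integrable (fun x : ℝ => Φ x / ((x:ℂ) - b)) ∧ ∫ x : ℝ, Φ x / ((x:ℂ) - b) = 0 := by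
  have hC := hC_nonneg Φ C R hdec
  have hne : ∀ w : ℂ, 0 ≤ w.im → w - b ≠ 0 := by
    intro w hw h
    have : (w - b).im = 0 := by rw [h]; simp
    rw [Complex.sub_im] at this
    linarith
  have hcont : ContinuousOn (fun w => Φ w / (w - b)) {w : ℂ | 0 ≤ w.im} := by
    exact hΦcont.div ((continuous_id.sub continuous_const).continuousOn)
      (fun w hw => hne w hw)
  have hdiff : ∀ w : ℂ, 0 < w.im → w ∉ (∅ : Set ℂ) → DifferentiableAt ℂ (fun w => Φ w / (w - b)) w := by
    intro w hw _
    have hmem : {w : ℂ | 0 ≤ w.im} ∈ 𝓝 w := by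
      refine mem_of_superset ?_ (fun p (hp : 0 < p.im) => le_of_lt hp)
      exact (Complex.continuous_im.isOpen_preimage _ isOpen_Ioi).mem_nhds hw
    exact ((hΦan.differentiableAt hmem).div
      ((differentiable_id.sub (differentiable_const _)) w) (hne w hw.le))
  have hdec2 : ∀ w : ℂ, 0 ≤ w.im → max R (2 * ‖b‖ + 1) ≤ ‖w‖ →
      ‖Φ w / (w - b)‖ ≤ (2 * C) / ‖w‖ ^ 2 := by
    intro w hw hwn
    have h1 : R ≤ ‖w‖ := le_trans (le_max_left _ _) hwn
    have h2 : 2 * ‖b‖ + 1 ≤ ‖w‖ := le_trans (le_max_right _ _) hwn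
    have hw0 : (0:ℝ) < ‖w‖ := by linarith [norm_nonneg b]
    have h3 : ‖w‖ / 2 ≤ ‖w - b‖ := by
      have := norm_sub_norm_le w b
      linarith
    rw [norm_div]
    calc ‖Φ w‖ / ‖w - b‖ ≤ (C / ‖w‖) / (‖w‖ / 2) := by
          gcongr
          exact hdec w hw h1
      _ = 2 * C / ‖w‖ ^ 2 := by field_simp
  exact halfplane_zero _ ∅ countable_empty hcont hdiff (2 * C) (max R (2 * ‖b‖ + 1)) hdec2

end Poles

lemma upper_pole (Φ : ℂ → ℂ) (C R : ℝ)
    (hΦan : DifferentiableOn ℂ Φ {w : ℂ | 0 ≤ w.im})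
    (hΦcont : ContinuousOn Φ {w : ℂ | 0 ≤ w.im})
    (hdec : ∀ w : ℂ, 0 ≤ w.im → R ≤ ‖w‖ → ‖Φ w‖ ≤ C / ‖w‖)
    (a : ℂ) (ha : 0 < a.im) :
    Integrable (fun x : ℝ => Φ x / ((x:ℂ) - a)) ∧
    ∫ x : ℝ, Φ x / ((x:ℂ) - a) = 2 * (π:ℂ) * I * Φ a := by
  have hC := hC_nonneg Φ C R hdec
  set b : ℂ := (starRingEnd ℂ) a with hb
  have hbim : b.im < 0 := by rw [hb, Complex.conj_im]; linarith
  have habne : a - b ≠ 0 := by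
    intro h
    have := congrArg Complex.im h
    rw [Complex.sub_im, Complex.zero_im] at this
    linarith
  have hΦat : ∀ w : ℂ, 0 < w.im → DifferentiableAt ℂ Φ w := by
    intro w hw
    refine hΦan.differentiableAt (mem_of_superset ?_ (fun p (hp : 0 < p.im) => le_of_lt hp))
    exact (Complex.continuous_im.isOpen_preimage _ isOpen_Ioi).mem_nhds hw
  have hne : ∀ w : ℂ, 0 ≤ w.im → w - b ≠ 0 := by
    intro w hw h
    have : (w - b).im = 0 := by rw [h]; simp
    rw [Complex.sub_im] at this
    linarith
  set K : ℂ := Φ a * (a - b) with hK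
  set N : ℂ → ℂ := fun w => Φ w - K / (w - b) with hN
  have hNa : N a = 0 := by
    rw [hN]
    simp only
    rw [hK, mul_div_assoc, div_self habne, mul_one, sub_self]
  have hNc : ContinuousOn N {w : ℂ | 0 ≤ w.im} :=
    hΦcont.sub (continuousOn_const.div
      ((continuous_id.sub continuous_const).continuousOn) (fun w hw => hne w hw))
  have hNd : ∀ w : ℂ, 0 < w.im → DifferentiableAt ℂ N w := by
    intro w hw
    exact (hΦat w hw).sub ((differentiableAt_const K).div (by fun_prop) (hne w hw.le))
  set G : ℂ → ℂ := fun w => if w = a then deriv N a else N w / (w - a) with hG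
  have hGne : ∀ w : ℂ, w ≠ a → G w = N w / (w - a) := fun w hw => if_neg hw
  have hGval : G a = deriv N a := if_pos rfl
  have hGc : ContinuousOn G {w : ℂ | 0 ≤ w.im} := by
    intro w hw
    by_cases hwa : w = a
    · subst hwa
      have hslope := hasDerivAt_iff_tendsto_slope.mp (hNd w ha).hasDerivAt
      have hEq : slope N w =ᶠ[𝓝[≠] w] G := by
        filter_upwards [self_mem_nhdsWithin] with y hy
        rw [hGne y hy, slope_def_field, hNa, sub_zero]
      have hGa : Tendsto G (𝓝[≠] w) (𝓝 (deriv N w)) := Filter.Tendsto.congr' hEq hslope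
      have hca : ContinuousAt G w := by
        rw [← continuousWithinAt_compl_self]
        show Tendsto G (𝓝[{w}ᶜ] w) (𝓝 (G w))
        rw [hGval]
        exact hGa
      exact hca.continuousWithinAt
    · have h1 : ContinuousWithinAt (fun y => N y / (y - a)) {w : ℂ | 0 ≤ w.im} w :=
        (hNc w hw).div ((continuous_id.sub continuous_const).continuousWithinAt)
          (sub_ne_zero.2 hwa)
      refine h1.congr_of_eventuallyEq ?_ (hGne w hwa)
      have hmem : {a}ᶜ ∈ 𝓝[{w : ℂ | 0 ≤ w.im}] w :=
        mem_nhdsWithin_of_mem_nhds (isOpen_compl_singleton.mem_nhds hwa)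
      filter_upwards [hmem] with y hy using hGne y hy
  have hGd : ∀ w : ℂ, 0 < w.im → w ∉ ({a} : Set ℂ) → DifferentiableAt ℂ G w := by
    intro w hw hwa
    rw [Set.mem_singleton_iff] at hwa
    have h1 : DifferentiableAt ℂ (fun y => N y / (y - a)) w :=
      (hNd w hw).div (by fun_prop) (sub_ne_zero.2 hwa)
    refine h1.congr_of_eventuallyEq ?_
    filter_upwards [isOpen_compl_singleton.mem_nhds hwa] with y hy using hGne y hy
  have hbnorm : ‖b‖ = ‖a‖ := by rw [hb, RCLike.norm_conj]
  have hGdec : ∀ w : ℂ, 0 ≤ w.im → max (max R 1) (2 * ‖a‖ + 1) ≤ ‖w‖ →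
      ‖G w‖ ≤ (2 * C + 4 * ‖K‖) / ‖w‖ ^ 2 := by
    intro w hw hwn
    have hR : R ≤ ‖w‖ := le_trans (le_trans (le_max_left _ _) (le_max_left _ _)) hwn
    have h1 : (1:ℝ) ≤ ‖w‖ := le_trans (le_trans (le_max_right _ _) (le_max_left _ _)) hwn
    have h2 : 2 * ‖a‖ + 1 ≤ ‖w‖ := le_trans (le_max_right _ _) hwn
    have hwa : w ≠ a := by
      intro h
      rw [h] at h2
      linarith [norm_nonneg (a : ℂ)]
    have hwb1 : ‖w‖ / 2 ≤ ‖w - a‖ := by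
      have := norm_sub_norm_le w a
      linarith
    have hwb2 : ‖w‖ / 2 ≤ ‖w - b‖ := by
      have := norm_sub_norm_le w b
      rw [hbnorm] at this
      linarith
    have hsplit : G w = Φ w / (w - a) - K / ((w - b) * (w - a)) := by
      rw [hGne w hwa, hN]
      simp only
      rw [sub_div, div_div]
    rw [hsplit]
    calc ‖Φ w / (w - a) - K / ((w - b) * (w - a))‖
        ≤ ‖Φ w‖ / ‖w - a‖ + ‖K‖ / (‖w - b‖ * ‖w - a‖) := by
          refine (norm_sub_le _ _).trans ?_
          rw [norm_div, norm_div, norm_mul (w - b) (w - a)]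
      _ ≤ (C / ‖w‖) / (‖w‖ / 2) + ‖K‖ / ((‖w‖ / 2) * (‖w‖ / 2)) := by
          gcongr <;> first | exact hdec w hw hR | linarith
      _ = (2 * C + 4 * ‖K‖) / ‖w‖ ^ 2 := by field_simp; ring
  obtain ⟨hGint, hGzero⟩ := halfplane_zero G {a} (Set.countable_singleton a) hGc hGd
    (2 * C + 4 * ‖K‖) (max (max R 1) (2 * ‖a‖ + 1)) hGdec
  obtain ⟨hψint, hψval⟩ := psi_facts a ha
  have hxa : ∀ x : ℝ, (x:ℂ) ≠ a := by
    intro x h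
    have := congrArg Complex.im h
    rw [Complex.ofReal_im] at this
    linarith
  have hrel : ∀ x : ℝ, Φ x / ((x:ℂ) - a)
      = G x + Φ a * ((a - b) / (((x:ℂ) - a) * ((x:ℂ) - b))) := by
    intro x
    rw [hGne _ (hxa x), hN]
    simp only
    have h1 : (x:ℂ) - a ≠ 0 := sub_ne_zero.2 (hxa x)
    have h2 : (x:ℂ) - b ≠ 0 := hne x (by simp)
    rw [hK]
    field_simp
    ring
  have hint2 : Integrable (fun x : ℝ => Φ x / ((x:ℂ) - a)) := by
    refine (hGint.add (hψint.const_mul (Φ a))).congr ?_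
    filter_upwards with x using (hrel x).symm
  refine ⟨hint2, ?_⟩
  calc ∫ x : ℝ, Φ x / ((x:ℂ) - a)
      = ∫ x : ℝ, (G x + Φ a * ((a - b) / (((x:ℂ) - a) * ((x:ℂ) - b)))) := by
        congr 1; funext x; exact hrel x
    _ = (∫ x : ℝ, G x) + Φ a * ∫ x : ℝ, (a - b) / (((x:ℂ) - a) * ((x:ℂ) - b)) := by
        rw [integral_add hGint (hψint.const_mul _), integral_const_mul]
    _ = 2 * (π:ℂ) * I * Φ a := by
        rw [hGzero, hb, hψval]; ring

/-- For `λ < 0`, if the eigenfunction candidate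
`Φ(x) = -(i/ε) e^{ih(x)/ε} ∫_{-∞}^x e^{-ih(z)/ε} Σ_p φ_p/(z - z_p) dz` (with
`h(x) = λx + f(x)`, `f` bounded with `f → 0` at `-∞`, poles `z_p` in the upper
half-plane) extends analytically to the closed upper half-plane, decays like `O(1/x)`
there, and `Σ_p φ_p = λ`, then `(1/(2πi)) ∫_ℝ u₀(x) Φ(x) dx = λ`. -/
theorem stmt8 (P : ℕ) (lam ε : ℝ) (hlam : lam < 0) (hε : 0 < ε)
    (c z φ : ℕ → ℂ)
    (hzim : ∀ p ∈ Finset.Icc 1 P, 0 < (z p).im)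
    (f : ℝ → ℂ) (M : ℝ) (hfb : ∀ x : ℝ, ‖f x‖ ≤ M)
    (hf0 : Tendsto f atBot (𝓝 0))
    (Φ : ℂ → ℂ)
    (hΦform : ∀ x : ℝ, Φ x = -(I / ε) * Complex.exp (I * ((lam : ℂ) * x + f x) / ε) *
      ∫ t in Set.Iic x, Complex.exp (-I * ((lam : ℂ) * t + f t) / ε) *
        ∑ p ∈ Finset.Icc 1 P, φ p / ((t : ℂ) - z p))
    (hΦan : DifferentiableOn ℂ Φ {w : ℂ | 0 ≤ w.im})
    (hΦcont : ContinuousOn Φ {w : ℂ | 0 ≤ w.im})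
    (hΦdecay : ∃ C R : ℝ, ∀ w : ℂ, 0 ≤ w.im → R ≤ ‖w‖ → ‖Φ w‖ ≤ C / ‖w‖)
    (hφp : ∀ p ∈ Finset.Icc 1 P, φ p = c p * Φ (z p))
    (hφsum : ∑ p ∈ Finset.Icc 1 P, φ p = (lam : ℂ))
    (u0 : ℝ → ℂ)
    (hu0 : ∀ x : ℝ, u0 x = ∑ p ∈ Finset.Icc 1 P,
      (c p / (x - z p) + (starRingEnd ℂ) (c p) / (x - (starRingEnd ℂ) (z p))))
    (hint : MeasureTheory.Integrable (fun x : ℝ => u0 x * Φ x)) :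
    (1 / (2 * (π : ℂ) * I)) * ∫ x : ℝ, u0 x * Φ x = (lam : ℂ) := by
  obtain ⟨C, R, hdec⟩ := hΦdecay
  have hup : ∀ p ∈ Finset.Icc 1 P,
      Integrable (fun x : ℝ => Φ x / ((x:ℂ) - z p)) ∧
      ∫ x : ℝ, Φ x / ((x:ℂ) - z p) = 2 * (π:ℂ) * I * Φ (z p) :=
    fun p hp => upper_pole Φ C R hΦan hΦcont hdec (z p) (hzim p hp)
  have hcp : ∀ p ∈ Finset.Icc 1 P,
      Integrable (fun x : ℝ => Φ x / ((x:ℂ) - (starRingEnd ℂ) (z p))) ∧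
      ∫ x : ℝ, Φ x / ((x:ℂ) - (starRingEnd ℂ) (z p)) = 0 := by
    intro p hp
    refine conj_pole Φ C R hΦan hΦcont hdec ((starRingEnd ℂ) (z p)) ?_
    rw [Complex.conj_im]
    linarith [hzim p hp]
  set S : ℕ → ℝ → ℂ := fun p x =>
    c p * (Φ x / ((x:ℂ) - z p))
      + (starRingEnd ℂ) (c p) * (Φ x / ((x:ℂ) - (starRingEnd ℂ) (z p))) with hS
  have hSint : ∀ p ∈ Finset.Icc 1 P, Integrable (S p) := fun p hp =>
    (((hup p hp).1.const_mul _).add (((hcp p hp).1.const_mul _)))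
  have hSval : ∀ p ∈ Finset.Icc 1 P, ∫ x : ℝ, S p x = 2 * (π:ℂ) * I * φ p := by
    intro p hp
    rw [hS]
    simp only
    rw [MeasureTheory.integral_add ((hup p hp).1.const_mul _) ((hcp p hp).1.const_mul _),
      MeasureTheory.integral_const_mul, MeasureTheory.integral_const_mul,
      (hup p hp).2, (hcp p hp).2, hφp p hp]
    ring
  have hptwise : ∀ x : ℝ, u0 x * Φ x = ∑ p ∈ Finset.Icc 1 P, S p x := by
    intro x
    rw [hu0, Finset.sum_mul]
    refine Finset.sum_congr rfl (fun p hp => ?_)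
    rw [hS]
    simp only
    ring
  have hval : ∫ x : ℝ, u0 x * Φ x = 2 * (π:ℂ) * I * lam := by
    calc ∫ x : ℝ, u0 x * Φ x = ∫ x : ℝ, ∑ p ∈ Finset.Icc 1 P, S p x := by
          congr 1; funext x; exact hptwise x
      _ = ∑ p ∈ Finset.Icc 1 P, ∫ x : ℝ, S p x :=
          MeasureTheory.integral_finset_sum _ hSint
      _ = ∑ p ∈ Finset.Icc 1 P, 2 * (π:ℂ) * I * φ p :=
          Finset.sum_congr rfl hSval
      _ = 2 * (π:ℂ) * I * ∑ p ∈ Finset.Icc 1 P, φ p := by rw [Finset.mul_sum]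
      _ = 2 * (π:ℂ) * I * lam := by rw [hφsum]
  rw [hval]
  have hπ : (π:ℂ) ≠ 0 := Complex.ofReal_ne_zero.2 Real.pi_ne_zero
  field_simp
end

section
/- Let A(λ) be a P×P complex matrix-valued analytic function on a neighborhood of λ_j ∈ ℂ, b(λ) a P-vector-valued analytic function, and suppose A(λ) satisfies the identity A'(λ) = (i/(ελ)) B(λ) - (i/ε) A(λ) Z, where B(λ) is the P×P matrix each of whose columns equals b(λ), Z = diag(z_1,...,z_P), and ε ≠ 0, λ_j ≠ 0. Suppose A(λ_j) has rank P-1 with right nullvector φ satisfying Σ_{p=1}^P φ_p = λ_j, and left nullvector m with mᵀ b(λ_j) ≠ 0. If v(λ) solves A(λ) v(λ) = b(λ) for λ near λ_j with λ ≠ λ_j, and v has a simple pole at λ_j with Laurent expansion v(λ) = v^{[-1]}/(λ - λ_j) + v^{[0]} + O(λ - λ_j), then v^{[-1]} = -iε φ. -/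
open Complex Filter Matrix Finset
open scoped Topology

/-!
Multiplying `A(λ) v(λ) = b(λ)` by `λ - λⱼ` and letting `λ → λⱼ` shows that the residue
`v⁽⁻¹⁾` lies in the kernel of `A(λⱼ)`, which is the line spanned by `φ`; so `v⁽⁻¹⁾ = c φ`.
Pairing the equation with the left null vector `m` kills `mᵀ A(λⱼ) v⁽⁰⁾`, and what survives of
`(λ - λⱼ)⁻¹ mᵀ A(λ) v⁽⁻¹⁾` is the derivative term `mᵀ A'(λⱼ) v⁽⁻¹⁾`. Hence
`mᵀ b(λⱼ) = mᵀ A'(λⱼ) v⁽⁻¹⁾ = (i / (ελⱼ)) (mᵀ b(λⱼ)) Σ_p c φ_p = (i c / ε) mᵀ b(λⱼ)`,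
because `mᵀ A(λⱼ) Z = 0`, and `mᵀ b(λⱼ) ≠ 0` forces `c = -iε`.
-/

theorem Matrix.exists_eq_smul_of_rank_eq_card_sub_one {K m n : Type*} [Field K] [Fintype n]
    {M : Matrix m n K} (hM : M.rank = Fintype.card n - 1) {φ w : n → K} (hφ : M *ᵥ φ = 0)
    (hφ0 : φ ≠ 0) (hw : M *ᵥ w = 0) : ∃ c : K, w = c • φ := by
  have hn : 0 < Fintype.card n := by
    obtain ⟨i, -⟩ := Function.ne_iff.mp hφ0
    exact Fintype.card_pos_iff.mpr ⟨i⟩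
  have hker : Module.finrank K (LinearMap.ker M.mulVecLin) = 1 := by
    have := LinearMap.finrank_range_add_finrank_ker M.mulVecLin
    rw [Module.finrank_fintype_fun_eq_card, ← Matrix.rank] at this
    omega
  obtain ⟨c, hc⟩ := (finrank_eq_one_iff_of_nonzero' (⟨φ, hφ⟩ : LinearMap.ker M.mulVecLin)
    fun h => hφ0 (congrArg Subtype.val h)).mp hker ⟨w, hw⟩
  exact ⟨c, congrArg Subtype.val hc.symm⟩

theorem Matrix.dotProduct_of_mulVec_of_vecMul_eq_zero {K m n : Type*} [Field K] [Fintype m]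
    [Fintype n] {x b : m → K} {N : Matrix m n K} (hN : x ᵥ* N = 0) (α β : K) (w : n → K) :
    x ⬝ᵥ (of (fun i j => α * b i - β * N i j) *ᵥ w) = α * (x ⬝ᵥ b) * ∑ j, w j := by
  have hsplit : of (fun i j => α * b i - β * N i j) = α • vecMulVec b 1 - β • N := by
    ext i j
    simp
  simp only [hsplit, sub_mulVec, smul_mulVec, vecMulVec_mulVec, dotProduct_sub,
    dotProduct_smul, dotProduct_mulVec x N, hN, zero_dotProduct, one_dotProduct]
  simp [mul_assoc]

theorem tendsto_sub_nhdsNE_zero {𝕜 : Type*} [NormedAddCommGroup 𝕜] (z₀ : 𝕜) :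
    Tendsto (fun z => z - z₀) (𝓝[≠] z₀) (𝓝 0) :=
  tendsto_sub_nhds_zero_iff.2 (tendsto_id.mono_left nhdsWithin_le_nhds)

section Laurent

variable {𝕜 E : Type*} [NontriviallyNormedField 𝕜] [NormedAddCommGroup E] [NormedSpace 𝕜 E]
  {v : 𝕜 → E} {z₀ : 𝕜} {w v₀ : E}

theorem tendsto_sub_inv_smul_of_norm_le {C r : ℝ} (hr : 0 < r)
    (h : ∀ z, z ≠ z₀ → ‖z - z₀‖ < r → ‖v z - ((z - z₀)⁻¹ • w + v₀)‖ ≤ C * ‖z - z₀‖) :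
    Tendsto (fun z => v z - (z - z₀)⁻¹ • w) (𝓝[≠] z₀) (𝓝 v₀) := by
  rw [tendsto_iff_norm_sub_tendsto_zero]
  refine squeeze_zero_norm' ?_ (a := fun z => C * ‖z - z₀‖) ?_
  · filter_upwards [self_mem_nhdsWithin, nhdsWithin_le_nhds (Metric.ball_mem_nhds z₀ hr)]
      with z hz hzr
    rw [norm_norm, sub_sub]
    exact h z hz (mem_ball_iff_norm.mp hzr)
  · simpa using (tendsto_sub_nhdsNE_zero z₀).norm.const_mul C

theorem tendsto_sub_smul_of_tendsto_sub_inv_smul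
    (h : Tendsto (fun z => v z - (z - z₀)⁻¹ • w) (𝓝[≠] z₀) (𝓝 v₀)) :
    Tendsto (fun z => (z - z₀) • v z) (𝓝[≠] z₀) (𝓝 w) := by
  have := tendsto_const_nhds (x := w) |>.add ((tendsto_sub_nhdsNE_zero z₀).smul h)
  rw [zero_smul, add_zero] at this
  refine this.congr' ?_
  filter_upwards [self_mem_nhdsWithin] with z hz
  rw [smul_sub, smul_inv_smul₀ (sub_ne_zero.mpr hz), add_sub_cancel]

end Laurent

theorem Filter.Tendsto.mulVec {α m n R : Type*} [Fintype n] [NonUnitalNonAssocSemiring R]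
    [TopologicalSpace R] [IsTopologicalSemiring R] {l : Filter α} {A : α → Matrix m n R}
    {x : α → n → R} {A₀ : Matrix m n R} {x₀ : n → R}
    (hA : Tendsto A l (𝓝 A₀)) (hx : Tendsto x l (𝓝 x₀)) :
    Tendsto (fun a => A a *ᵥ x a) l (𝓝 (A₀ *ᵥ x₀)) :=
  ((continuous_fst.matrix_mulVec continuous_snd).tendsto (A₀, x₀)).comp (hA.prodMk_nhds hx)

theorem Filter.Tendsto.dotProduct {α n R : Type*} [Fintype n] [NonUnitalNonAssocSemiring R]
    [TopologicalSpace R] [IsTopologicalSemiring R] {l : Filter α} {x y : α → n → R}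
    {x₀ y₀ : n → R} (hx : Tendsto x l (𝓝 x₀)) (hy : Tendsto y l (𝓝 y₀)) :
    Tendsto (fun a => x a ⬝ᵥ y a) l (𝓝 (x₀ ⬝ᵥ y₀)) :=
  ((continuous_fst.dotProduct continuous_snd).tendsto (x₀, y₀)).comp (hx.prodMk_nhds hy)

section Residue

variable {𝕜 m n : Type*} [NontriviallyNormedField 𝕜]
  {A : 𝕜 → Matrix m n 𝕜} {b : 𝕜 → m → 𝕜} {v : 𝕜 → n → 𝕜} {z₀ : 𝕜} {w : n → 𝕜}

theorem continuousAt_of_hasDerivAt_apply {A' : Matrix m n 𝕜}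
    (hA : ∀ i j, HasDerivAt (fun z => A z i j) (A' i j) z₀) : ContinuousAt A z₀ :=
  continuousAt_pi.2 fun i => continuousAt_pi.2 fun j => (hA i j).continuousAt

variable [Fintype n]

theorem mulVec_eq_zero_of_tendsto_sub_smul (hA : ContinuousAt A z₀) (hb : ContinuousAt b z₀)
    (hsolve : ∀ᶠ z in 𝓝[≠] z₀, A z *ᵥ v z = b z)
    (hv : Tendsto (fun z => (z - z₀) • v z) (𝓝[≠] z₀) (𝓝 w)) :
    A z₀ *ᵥ w = 0 := by
  have hlhs := (hA.tendsto.mono_left nhdsWithin_le_nhds).mulVec hv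
  have hrhs := (tendsto_sub_nhdsNE_zero z₀).smul (hb.tendsto.mono_left nhdsWithin_le_nhds)
  rw [zero_smul] at hrhs
  refine tendsto_nhds_unique (hlhs.congr' ?_) hrhs
  filter_upwards [hsolve] with z hz
  rw [mulVec_smul, hz]

theorem hasDerivAt_dotProduct_mulVec [Fintype m] {A' : Matrix m n 𝕜} (x : m → 𝕜) (w : n → 𝕜)
    (hA : ∀ i j, HasDerivAt (fun z => A z i j) (A' i j) z₀) :
    HasDerivAt (fun z => x ⬝ᵥ (A z *ᵥ w)) (x ⬝ᵥ (A' *ᵥ w)) z₀ := by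
  simp only [dotProduct, mulVec]
  exact HasDerivAt.fun_sum fun i _ =>
    (HasDerivAt.fun_sum fun j _ => (hA i j).mul_const (w j)).const_mul (x i)

theorem dotProduct_eq_dotProduct_mulVec_of_hasDerivAt [Fintype m] {A' : Matrix m n 𝕜}
    {x : m → 𝕜} {v₀ : n → 𝕜} (hx : x ᵥ* A z₀ = 0)
    (hA : ∀ i j, HasDerivAt (fun z => A z i j) (A' i j) z₀) (hw : A z₀ *ᵥ w = 0)
    (hb : ContinuousAt b z₀) (hsolve : ∀ᶠ z in 𝓝[≠] z₀, A z *ᵥ v z = b z)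
    (hv : Tendsto (fun z => v z - (z - z₀)⁻¹ • w) (𝓝[≠] z₀) (𝓝 v₀)) :
    x ⬝ᵥ b z₀ = x ⬝ᵥ (A' *ᵥ w) := by
  have hslope := hasDerivAt_iff_tendsto_slope.mp (hasDerivAt_dotProduct_mulVec x w hA)
  have hreg := ((continuousAt_of_hasDerivAt_apply hA).tendsto.mono_left
    nhdsWithin_le_nhds).mulVec hv
  have hlim := hslope.add ((tendsto_const_nhds (x := x)).dotProduct hreg)
  rw [dotProduct_mulVec x (A z₀), hx, zero_dotProduct, add_zero] at hlim
  have hpair : Tendsto (fun z => x ⬝ᵥ b z) (𝓝[≠] z₀) (𝓝 (x ⬝ᵥ b z₀)) :=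
    tendsto_const_nhds.dotProduct (hb.tendsto.mono_left nhdsWithin_le_nhds)
  refine tendsto_nhds_unique (hpair.congr' ?_) hlim
  filter_upwards [hsolve] with z hz
  simp only [slope, vsub_eq_sub, hw, dotProduct_zero, sub_zero, mulVec_sub, mulVec_smul,
    dotProduct_sub, dotProduct_smul, hz, smul_eq_mul, add_sub_cancel]

end Residue

theorem stmt10_general (P : ℕ) (ε : ℝ) (hε : ε ≠ 0) (lamj : ℂ) (hlamj : lamj ≠ 0)
    (A : ℂ → Matrix (Fin P) (Fin P) ℂ) (b : ℂ → Fin P → ℂ) (zd : Fin P → ℂ)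
    (hban : ∀ i : Fin P, AnalyticAt ℂ (fun l => b l i) lamj)
    (r : ℝ) (hr : 0 < r)
    (hA' : ∀ l : ℂ, l ≠ 0 → ‖l - lamj‖ < r → ∀ i j : Fin P,
      HasDerivAt (fun l' => A l' i j)
        ((I / (ε * l)) * b l i - (I / (ε : ℂ)) * (A l * Matrix.diagonal zd) i j) l)
    (hrank : (A lamj).rank = P - 1)
    (φ : Fin P → ℂ) (hφ : A lamj *ᵥ φ = 0) (hφnorm : ∑ p, φ p = lamj)
    (m : Fin P → ℂ) (hm : m ᵥ* A lamj = 0) (hmb : m ⬝ᵥ b lamj ≠ 0)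
    (v : ℂ → Fin P → ℂ)
    (hsolve : ∀ l : ℂ, l ≠ lamj → ‖l - lamj‖ < r → A l *ᵥ v l = b l)
    (vm1 v0 : Fin P → ℂ) (C : ℝ)
    (hLaurent : ∀ l : ℂ, l ≠ lamj → ‖l - lamj‖ < r →
      ‖v l - ((l - lamj)⁻¹ • vm1 + v0)‖ ≤ C * ‖l - lamj‖) :
    vm1 = (-(I * ε)) • φ := by
  have hderiv := hA' lamj hlamj (by simpa using hr)
  have hb : ContinuousAt b lamj := continuousAt_pi.2 fun i => (hban i).continuousAt
  have hsolve' : ∀ᶠ l in 𝓝[≠] lamj, A l *ᵥ v l = b l := by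
    filter_upwards [self_mem_nhdsWithin, nhdsWithin_le_nhds (Metric.ball_mem_nhds lamj hr)]
      with l hl hlr using hsolve l hl (mem_ball_iff_norm.mp hlr)
  have hrem := tendsto_sub_inv_smul_of_norm_le hr hLaurent
  have hker : A lamj *ᵥ vm1 = 0 := mulVec_eq_zero_of_tendsto_sub_smul
    (continuousAt_of_hasDerivAt_apply hderiv) hb hsolve'
    (tendsto_sub_smul_of_tendsto_sub_inv_smul hrem)
  have hφ0 : φ ≠ 0 := by
    rintro rfl
    exact hlamj (by simpa using hφnorm.symm)
  obtain ⟨c, rfl⟩ :=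
    exists_eq_smul_of_rank_eq_card_sub_one (by rwa [Fintype.card_fin]) hφ hφ0 hker
  have hres := dotProduct_eq_dotProduct_mulVec_of_hasDerivAt
    (A' := of fun i j => (I / (ε * lamj)) * b lamj i - (I / (ε : ℂ)) * (A lamj * diagonal zd) i j)
    hm hderiv hker hb hsolve' hrem
  rw [dotProduct_of_mulVec_of_vecMul_eq_zero (by rw [← vecMul_vecMul, hm, zero_vecMul])] at hres
  simp only [Pi.smul_apply, smul_eq_mul, ← mul_sum, hφnorm] at hres
  have hεC : (ε : ℂ) ≠ 0 := ofReal_ne_zero.mpr hε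
  have hIc : I * c = ε := by
    field_simp at hres
    exact hres.symm
  rw [show c = -(I * ε) by linear_combination (-I) * hIc + c * I_sq]

/-- Under the differential identity `A'(λ) = (i/(ελ))B(λ) - (i/ε)A(λ)Z`
(columns of `B(λ)` all equal `b(λ)`, `Z = diag(z₁,…,z_P)`), with `A(λⱼ)` of rank `P-1`,
right nullvector `φ` normalized by `Σφ_p = λⱼ`, left nullvector `m` with `mᵀb(λⱼ) ≠ 0`,
and `v(λ)` solving `A(λ)v(λ) = b(λ)` near `λⱼ` with a simple-pole Laurent expansion
`v(λ) = v⁽⁻¹⁾/(λ-λⱼ) + v⁽⁰⁾ + O(λ-λⱼ)`, the residue is `v⁽⁻¹⁾ = -iε φ`. -/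
theorem stmt10 (P : ℕ) (ε : ℝ) (hε : ε ≠ 0) (lamj : ℂ) (hlamj : lamj ≠ 0)
    (A : ℂ → Matrix (Fin P) (Fin P) ℂ) (b : ℂ → Fin P → ℂ) (zd : Fin P → ℂ)
    (hAan : ∀ i j : Fin P, AnalyticAt ℂ (fun l => A l i j) lamj)
    (hban : ∀ i : Fin P, AnalyticAt ℂ (fun l => b l i) lamj)
    (r : ℝ) (hr : 0 < r)
    (hA' : ∀ l : ℂ, l ≠ 0 → ‖l - lamj‖ < r → ∀ i j : Fin P,
      HasDerivAt (fun l' => A l' i j)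
        ((I / (ε * l)) * b l i - (I / (ε : ℂ)) * (A l * Matrix.diagonal zd) i j) l)
    (hrank : (A lamj).rank = P - 1)
    (φ : Fin P → ℂ) (hφ : A lamj *ᵥ φ = 0) (hφnorm : ∑ p, φ p = lamj)
    (m : Fin P → ℂ) (hm : m ᵥ* A lamj = 0) (hmb : m ⬝ᵥ b lamj ≠ 0)
    (v : ℂ → Fin P → ℂ)
    (hsolve : ∀ l : ℂ, l ≠ lamj → ‖l - lamj‖ < r → A l *ᵥ v l = b l)
    (vm1 v0 : Fin P → ℂ) (C : ℝ)
    (hLaurent : ∀ l : ℂ, l ≠ lamj → ‖l - lamj‖ < r →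
      ‖v l - ((l - lamj)⁻¹ • vm1 + v0)‖ ≤ C * ‖l - lamj‖) :
    vm1 = (-(I * ε)) • φ :=
  stmt10_general P ε hε lamj hlamj A b zd hban r hr hA' hrank φ hφ hφnorm m hm hmb v hsolve vm1 v0 C
    hLaurent
end
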